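/- For every (r,p) ∈ ℝ^{N−1}×ℝ^N, the conserved quantity I(r,p) = (1/2)[ Σ_{x=1}^N (r_x − r_{x−1})²/m_x + Σ_{x=1}^{N−1} (p_{x+1}/m_{x+1} − p_x/m_x)² ] (with r_0 = r_N = 0) admits the eigenmode expansion I(r,p) = (1/2) Σ_{k=1}^{N−1} ω_k² ( ⟨p, ψ^k⟩² + ω_k^{−2} ⟨r, ∇₊ψ^k⟩² ). -/

import Mathlib

/-!
Both halves of `I` are diagonalised by the eigenmodes. Since `N` vectors that are orthonormal for
`⟨·, M ·⟩` form a basis, they are also complete, `∑ₖ ψᵏ_x ψᵏ_y m_y = δ_xy`; this gives the expansion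
`p / m = ∑ₖ ⟨p, ψᵏ⟩ ψᵏ` and Parseval's identity `∑ₖ ⟨g, ψᵏ⟩² = ∑ₓ g_x² / m_x`. Parseval applied to
`g = r_x − r_{x−1}`, followed by a summation by parts, gives the `r`-half. For the `p`-half, expand
`∇₊(p / m)` in the modes and use the discrete Green identity
`⟨∇₊v, ∇₊ψᵏ⟩ = ω_k² ⟨v, Mψᵏ⟩`, which comes from summation by parts and the free boundary conditions.
The zero mode contributes nothing: Green's identity with `v = ψ⁰` gives `‖∇₊ψ⁰‖² = ω₀² = 0`, so
`⟨r, ∇₊ψ⁰⟩ = 0` as well.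
-/
open Finset

/-- The disordered harmonic chain dynamics on `{1,…,N}`: `r` has components `1 ≤ x ≤ N-1`
(with the convention `r_0 = r_N = 0`) and `p` has components `1 ≤ x ≤ N`. -/
def IsChainSolution (N : ℕ) (m : ℕ → ℝ) (r p : ℝ → ℕ → ℝ) : Prop :=
  (∀ t : ℝ, r t 0 = 0) ∧ (∀ t : ℝ, r t N = 0) ∧
  (∀ (t : ℝ) (x : ℕ), 1 ≤ x → x ≤ N - 1 →
    HasDerivAt (fun s => r s x) (p t (x + 1) / m (x + 1) - p t x / m x) t) ∧
  (∀ (t : ℝ) (x : ℕ), 1 ≤ x → x ≤ N →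
    HasDerivAt (fun s => p s x) (r t x - r t (x - 1)) t)

/-- Eigenmodes of the operator `M⁻¹(−Δ)` with free boundary conditions
(`ψ_0 = ψ_1`, `ψ_{N+1} = ψ_N`), normalized by `⟨ψ^j, Mψ^k⟩ = δ_{jk}`, with `ω_0 = 0` and
`ω_k > 0` for `1 ≤ k ≤ N−1`. -/
def IsEigenSystem (N : ℕ) (m : ℕ → ℝ) (ψ : ℕ → ℕ → ℝ) (W : ℕ → ℝ) : Prop :=
  (∀ k ≤ N - 1, ψ k 0 = ψ k 1 ∧ ψ k (N + 1) = ψ k N) ∧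
  (∀ k ≤ N - 1, ∀ x : ℕ, 1 ≤ x → x ≤ N →
    -(ψ k (x + 1) - 2 * ψ k x + ψ k (x - 1)) = (W k) ^ 2 * (m x * ψ k x)) ∧
  (∀ j ≤ N - 1, ∀ k ≤ N - 1,
    (∑ x ∈ Finset.Icc 1 N, m x * ψ j x * ψ k x) = if j = k then 1 else 0) ∧
  W 0 = 0 ∧ (∀ k : ℕ, 1 ≤ k → k ≤ N - 1 → 0 < W k)

section SummationByParts

variable {R : Type*} [CommRing R]

theorem sum_Icc_by_parts (u e : ℕ → R) (n : ℕ) :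
    ∑ x ∈ Icc 1 (n + 1), u x * (e x - e (x - 1))
      = u (n + 1) * e (n + 1) - u 1 * e 0 - ∑ x ∈ Icc 1 n, (u (x + 1) - u x) * e x := by
  induction n with
  | zero => simp [mul_sub]
  | succ n ih =>
    rw [sum_Icc_succ_top (by omega), ih, sum_Icc_succ_top (by omega), Nat.add_sub_cancel]
    ring

theorem sum_Icc_by_parts_of_eq_zero (u e : ℕ → R) {n : ℕ} (he0 : e 0 = 0) (hen : e n = 0) :
    ∑ x ∈ Icc 1 n, u x * (e x - e (x - 1)) = -∑ x ∈ Icc 1 (n - 1), (u (x + 1) - u x) * e x := by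
  cases n with
  | zero => simp
  | succ n => simp [sum_Icc_by_parts, he0, hen]

theorem sum_grad_mul_grad_eq_of_eigen {N : ℕ} {m φ : ℕ → R} {μ : R}
    (hφ0 : φ 0 = φ 1) (hφN : φ (N + 1) = φ N)
    (heq : ∀ x : ℕ, 1 ≤ x → x ≤ N → -(φ (x + 1) - 2 * φ x + φ (x - 1)) = μ * (m x * φ x))
    (v : ℕ → R) :
    ∑ x ∈ Icc 1 (N - 1), (v (x + 1) - v x) * (φ (x + 1) - φ x)
      = μ * ∑ x ∈ Icc 1 N, m x * v x * φ x := by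
  have hparts := sum_Icc_by_parts_of_eq_zero v (fun x ↦ φ (x + 1) - φ x) (n := N)
    (by simp [hφ0]) (by simp [hφN])
  rw [← neg_neg (∑ x ∈ Icc 1 (N - 1), _), ← hparts, ← sum_neg_distrib, mul_sum]
  refine sum_congr rfl fun x hx ↦ ?_
  obtain ⟨hx1, hxN⟩ := mem_Icc.mp hx
  rw [Nat.sub_add_cancel hx1]
  linear_combination v x * heq x hx1 hxN

end SummationByParts

section Orthonormal

variable {κ ι : Type*} [DecidableEq κ] [DecidableEq ι] {modes : Finset κ} {sites : Finset ι}

theorem sum_mul_mul_eq_ite_of_orthonormal {R : Type*} [CommRing R] {m : ι → R} {ψ : κ → ι → R}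
    (hcard : #modes = #sites)
    (horth : ∀ j ∈ modes, ∀ k ∈ modes,
      ∑ x ∈ sites, m x * ψ j x * ψ k x = if j = k then 1 else 0)
    {x y : ι} (hx : x ∈ sites) (hy : y ∈ sites) :
    ∑ k ∈ modes, ψ k x * ψ k y * m y = if x = y then 1 else 0 := by
  let A : Matrix modes sites R := Matrix.of fun j x ↦ m x * ψ j x
  let B : Matrix sites modes R := Matrix.of fun x k ↦ ψ k x
  have hAB : A * B = 1 := by
    ext j k
    rw [Matrix.mul_apply, Matrix.one_apply]
    simp only [A, B, Matrix.of_apply]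
    rw [sum_coe_sort sites fun x ↦ m x * ψ j x * ψ k x, horth j j.2 k k.2]
    exact if_congr Subtype.coe_inj rfl rfl
  have hBA : B * A = 1 := (Matrix.mul_eq_one_comm_of_card_eq _ _ _ (by simpa using hcard)).mp hAB
  have hxy := congrFun (congrFun hBA ⟨x, hx⟩) ⟨y, hy⟩
  simp only [A, B, Matrix.mul_apply, Matrix.one_apply, Matrix.of_apply, Subtype.mk.injEq] at hxy
  rw [← hxy, ← sum_coe_sort modes]
  exact sum_congr rfl fun k _ ↦ by ring

variable {K : Type*} [Field K] {m : ι → K} {ψ : κ → ι → K}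

theorem sum_mul_sum_mul_eq_div_of_orthonormal (hcard : #modes = #sites)
    (horth : ∀ j ∈ modes, ∀ k ∈ modes,
      ∑ x ∈ sites, m x * ψ j x * ψ k x = if j = k then 1 else 0)
    (g : ι → K) {y : ι} (hy : y ∈ sites) (hmy : m y ≠ 0) :
    ∑ k ∈ modes, ψ k y * ∑ x ∈ sites, ψ k x * g x = g y / m y := by
  calc ∑ k ∈ modes, ψ k y * ∑ x ∈ sites, ψ k x * g x
      = ∑ x ∈ sites, g x / m y * ∑ k ∈ modes, ψ k x * ψ k y * m y := by
        simp_rw [mul_sum]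
        rw [sum_comm]
        exact sum_congr rfl fun x _ ↦ sum_congr rfl fun k _ ↦ by field_simp
    _ = ∑ x ∈ sites, if x = y then g x / m y else 0 := by
        refine sum_congr rfl fun x hx ↦ ?_
        rw [sum_mul_mul_eq_ite_of_orthonormal hcard horth hx hy, mul_ite, mul_one, mul_zero]
    _ = g y / m y := by simp [hy]

theorem sum_sq_sum_mul_eq_sum_sq_div_of_orthonormal (hcard : #modes = #sites)
    (horth : ∀ j ∈ modes, ∀ k ∈ modes,
      ∑ x ∈ sites, m x * ψ j x * ψ k x = if j = k then 1 else 0)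
    (hm : ∀ x ∈ sites, m x ≠ 0) (g : ι → K) :
    ∑ k ∈ modes, (∑ x ∈ sites, ψ k x * g x) ^ 2 = ∑ x ∈ sites, g x ^ 2 / m x := by
  calc ∑ k ∈ modes, (∑ x ∈ sites, ψ k x * g x) ^ 2
      = ∑ y ∈ sites, g y * ∑ k ∈ modes, ψ k y * ∑ x ∈ sites, ψ k x * g x := by
        simp_rw [sq, sum_mul]
        rw [sum_comm]
        refine sum_congr rfl fun y _ ↦ ?_
        rw [mul_sum]
        exact sum_congr rfl fun k _ ↦ by ring
    _ = ∑ y ∈ sites, g y ^ 2 / m y := sum_congr rfl fun y hy ↦ by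
        rw [sum_mul_sum_mul_eq_div_of_orthonormal hcard horth g hy (hm y hy)]
        ring

end Orthonormal

namespace IsEigenSystem

variable {N : ℕ} {m : ℕ → ℝ} {ψ : ℕ → ℕ → ℝ} {W : ℕ → ℝ}

theorem orthonormal (h : IsEigenSystem N m ψ W) :
    ∀ j ∈ range N, ∀ k ∈ range N,
      ∑ x ∈ Icc 1 N, m x * ψ j x * ψ k x = if j = k then 1 else 0 :=
  fun j hj k hk ↦ h.2.2.1 j (by rw [mem_range] at hj; omega) k (by rw [mem_range] at hk; omega)

theorem sum_grad_mul_grad (h : IsEigenSystem N m ψ W) {k : ℕ} (hk : k ∈ range N) (v : ℕ → ℝ) :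
    ∑ x ∈ Icc 1 (N - 1), (v (x + 1) - v x) * (ψ k (x + 1) - ψ k x)
      = W k ^ 2 * ∑ x ∈ Icc 1 N, m x * v x * ψ k x := by
  have hk' : k ≤ N - 1 := by rw [mem_range] at hk; omega
  exact sum_grad_mul_grad_eq_of_eigen (h.1 k hk').1 (h.1 k hk').2 (h.2.1 k hk') v

theorem sum_sq_grad_eq_sq_frequency (h : IsEigenSystem N m ψ W) {k : ℕ} (hk : k ∈ range N) :
    ∑ x ∈ Icc 1 (N - 1), (ψ k (x + 1) - ψ k x) ^ 2 = W k ^ 2 := by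
  simpa [sq, h.orthonormal k hk k hk] using h.sum_grad_mul_grad hk (ψ k)

theorem grad_eq_zero_of_frequency_eq_zero (h : IsEigenSystem N m ψ W) {k : ℕ} (hk : k ∈ range N)
    (hW : W k = 0) {x : ℕ} (hx : x ∈ Icc 1 (N - 1)) : ψ k (x + 1) - ψ k x = 0 := by
  have henergy := h.sum_sq_grad_eq_sq_frequency hk
  rw [hW, zero_pow two_ne_zero, sum_eq_zero_iff_of_nonneg fun _ _ ↦ sq_nonneg _] at henergy
  exact pow_eq_zero_iff two_ne_zero |>.mp (henergy x hx)

theorem sum_sq_sub_pred_div_eq (h : IsEigenSystem N m ψ W) (hm : ∀ x ∈ Icc 1 N, m x ≠ 0)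
    (r : ℕ → ℝ) (hr0 : r 0 = 0) (hrN : r N = 0) :
    ∑ x ∈ Icc 1 N, (r x - r (x - 1)) ^ 2 / m x
      = ∑ k ∈ range N, (∑ x ∈ Icc 1 (N - 1), (ψ k (x + 1) - ψ k x) * r x) ^ 2 := by
  rw [← sum_sq_sum_mul_eq_sum_sq_div_of_orthonormal (by simp) h.orthonormal hm]
  refine sum_congr rfl fun k _ ↦ ?_
  rw [sum_Icc_by_parts_of_eq_zero (ψ k) r hr0 hrN, neg_sq]

theorem sum_sq_grad_div_eq (h : IsEigenSystem N m ψ W) (hm : ∀ x ∈ Icc 1 N, m x ≠ 0)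
    (p : ℕ → ℝ) :
    ∑ x ∈ Icc 1 (N - 1), (p (x + 1) / m (x + 1) - p x / m x) ^ 2
      = ∑ k ∈ range N, W k ^ 2 * (∑ x ∈ Icc 1 N, ψ k x * p x) ^ 2 := by
  set c : ℕ → ℝ := fun k ↦ ∑ x ∈ Icc 1 N, ψ k x * p x
  have hexpand : ∀ x ∈ Icc 1 (N - 1),
      p (x + 1) / m (x + 1) - p x / m x = ∑ k ∈ range N, c k * (ψ k (x + 1) - ψ k x) := by
    intro x hx
    obtain ⟨hx1, hxN⟩ := mem_Icc.mp hx
    have hx : x ∈ Icc 1 N := mem_Icc.mpr ⟨hx1, by omega⟩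
    have hx' : x + 1 ∈ Icc 1 N := mem_Icc.mpr ⟨by omega, by omega⟩
    have hmodes := fun y (hy : y ∈ Icc 1 N) ↦
      sum_mul_sum_mul_eq_div_of_orthonormal (by simp) h.orthonormal p hy (hm y hy)
    rw [← hmodes _ hx', ← hmodes _ hx, ← sum_sub_distrib]
    exact sum_congr rfl fun k _ ↦ by ring
  have hgreen : ∀ k ∈ range N,
      ∑ x ∈ Icc 1 (N - 1), (p (x + 1) / m (x + 1) - p x / m x) * (ψ k (x + 1) - ψ k x)
        = W k ^ 2 * c k := by
    intro k hk
    rw [h.sum_grad_mul_grad hk fun x ↦ p x / m x]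
    congr 1
    exact sum_congr rfl fun x hx ↦ by field_simp [hm x hx]
  calc ∑ x ∈ Icc 1 (N - 1), (p (x + 1) / m (x + 1) - p x / m x) ^ 2
      = ∑ x ∈ Icc 1 (N - 1), (p (x + 1) / m (x + 1) - p x / m x)
          * ∑ k ∈ range N, c k * (ψ k (x + 1) - ψ k x) :=
        sum_congr rfl fun x hx ↦ by rw [sq, ← hexpand x hx]
    _ = ∑ k ∈ range N, c k * ∑ x ∈ Icc 1 (N - 1),
          (p (x + 1) / m (x + 1) - p x / m x) * (ψ k (x + 1) - ψ k x) := by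
        simp_rw [mul_sum]
        rw [sum_comm]
        exact sum_congr rfl fun k _ ↦ sum_congr rfl fun x _ ↦ by ring
    _ = ∑ k ∈ range N, W k ^ 2 * c k ^ 2 :=
        sum_congr rfl fun k hk ↦ by rw [hgreen k hk]; ring

end IsEigenSystem

/-- eigenmode expansion of the conserved quantity
`I(r,p) = (1/2)[ Σ_{x=1}^N (r_x − r_{x−1})²/m_x + Σ_{x=1}^{N−1} (p_{x+1}/m_{x+1} − p_x/m_x)² ]`
(with the conventions `r_0 = r_N = 0`). -/
theorem stmt16 (N : ℕ) (hN : 2 ≤ N) (m : ℕ → ℝ) (hm : ∀ x, 0 < m x)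
    (ψ : ℕ → ℕ → ℝ) (W : ℕ → ℝ) (heigen : IsEigenSystem N m ψ W)
    (r p : ℕ → ℝ) (hr0 : r 0 = 0) (hrN : r N = 0) :
    (1 / 2) * ((∑ x ∈ Finset.Icc 1 N, (r x - r (x - 1)) ^ 2 / m x)
        + ∑ x ∈ Finset.Icc 1 (N - 1), (p (x + 1) / m (x + 1) - p x / m x) ^ 2)
      = (1 / 2) * ∑ k ∈ Finset.Icc 1 (N - 1),
          (W k) ^ 2 * ((∑ x ∈ Finset.Icc 1 N, ψ k x * p x) ^ 2
            + ((W k) ^ 2)⁻¹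
              * (∑ x ∈ Finset.Icc 1 (N - 1), (ψ k (x + 1) - ψ k x) * r x) ^ 2) := by
  have hm' : ∀ x ∈ Icc 1 N, m x ≠ 0 := fun x _ ↦ (hm x).ne'
  rw [heigen.sum_sq_sub_pred_div_eq hm' r hr0 hrN, heigen.sum_sq_grad_div_eq hm' p,
    ← sum_add_distrib]
  have hmode : ∀ k ∈ range N,
      (∑ x ∈ Icc 1 (N - 1), (ψ k (x + 1) - ψ k x) * r x) ^ 2
          + W k ^ 2 * (∑ x ∈ Icc 1 N, ψ k x * p x) ^ 2
        = W k ^ 2 * ((∑ x ∈ Icc 1 N, ψ k x * p x) ^ 2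
          + (W k ^ 2)⁻¹ * (∑ x ∈ Icc 1 (N - 1), (ψ k (x + 1) - ψ k x) * r x) ^ 2) := by
    intro k hk
    by_cases hW : W k = 0
    · have hgrad : ∑ x ∈ Icc 1 (N - 1), (ψ k (x + 1) - ψ k x) * r x = 0 :=
        sum_eq_zero fun x hx ↦ by rw [heigen.grad_eq_zero_of_frequency_eq_zero hk hW hx, zero_mul]
      simp [hW, hgrad]
    · field_simp
      ring
  have hrange : range N = insert 0 (Icc 1 (N - 1)) := by
    ext k
    simp only [mem_range, mem_insert, mem_Icc]
    omega
  rw [sum_congr rfl hmode, hrange, sum_insert (by simp), heigen.2.2.2.1]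
  simp
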